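/- For all real numbers z, y with 0 ≤ z ≤ y ≤ 1 and y − z ≤ 3/4, one has M[z,y] ≤ M[(z + M[z,y])/2, M[M[z,y], y]]. -/
import Mathlib


open MeasureTheory

noncomputable section

/-- The nonlinear mean `M[a,b] = (a+b)/√(4+(a-b)²)`. -/
def nlMean (a b : ℝ) : ℝ := (a + b) / Real.sqrt (4 + (a - b) ^ 2)

lemma sqrt_ub (t : ℝ) : Real.sqrt (4 + t ^ 2) ≤ 2 + t ^ 2 / 4 := by
  rw [show (2 + t ^ 2 / 4) = Real.sqrt ((2 + t ^ 2 / 4) ^ 2) from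
    (Real.sqrt_sq (by positivity)).symm]
  apply Real.sqrt_le_sqrt
  nlinarith [sq_nonneg (t ^ 2)]

lemma sqrt_lb (t : ℝ) (h1 : t ^ 2 ≤ 1) :
    2 + t ^ 2 / 4 - t ^ 4 / 64 ≤ Real.sqrt (4 + t ^ 2) := by
  have h0 : (0:ℝ) ≤ 2 + t ^ 2 / 4 - t ^ 4 / 64 := by nlinarith [sq_nonneg t, sq_nonneg (t^2)]
  have := Real.sqrt_le_sqrt (show (2 + t ^ 2 / 4 - t ^ 4 / 64) ^ 2 ≤ 4 + t ^ 2 by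
    nlinarith [sq_nonneg t, sq_nonneg (t ^ 2), sq_nonneg (t ^ 3)])
  rwa [Real.sqrt_sq h0] at this

lemma nlMean_nonneg (a b : ℝ) (h : 0 ≤ a + b) : 0 ≤ nlMean a b :=
  div_nonneg h (Real.sqrt_nonneg _)

lemma nlMean_mul (a b : ℝ) : nlMean a b * Real.sqrt (4 + (a - b) ^ 2) = a + b := by
  rw [nlMean, div_mul_cancel₀]
  exact ne_of_gt (Real.sqrt_pos.mpr (by positivity))

lemma nlMean_upper (a b : ℝ) (h : 0 ≤ a + b) :
    a + b ≤ nlMean a b * (2 + (a - b) ^ 2 / 4) := by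
  have h1 := nlMean_mul a b
  have h2 := sqrt_ub (a - b)
  have h3 := nlMean_nonneg a b h
  nlinarith [mul_le_mul_of_nonneg_left h2 h3]

lemma nlMean_lower (a b : ℝ) (h : 0 ≤ a + b) (h1 : (a - b) ^ 2 ≤ 1) :
    nlMean a b * (2 + (a - b) ^ 2 / 4 - (a - b) ^ 4 / 64) ≤ a + b := by
  have he := nlMean_mul a b
  have h2 := sqrt_lb (a - b) h1
  have h3 := nlMean_nonneg a b h
  nlinarith [mul_le_mul_of_nonneg_left h2 h3]

set_option maxHeartbeats 800000 in
lemma stepC (m p D : ℝ) (hm : 0 ≤ m) (hp : 0 ≤ p) (hD : 0 ≤ D) (hD2 : D ≤ 3/4)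
    (hmp : m + p ≤ 1) (hpm : 4*p ≤ m*(4+D^2)) (hDp : D ≤ 2*p) (hpD : p ≤ D) :
    (2*m+p)*(4+m*D)^2 ≤ 8*m*(8-D^2) := by
  nlinarith [mul_nonneg (sub_nonneg.2 hmp) (mul_nonneg hD hD),
    mul_nonneg (sub_nonneg.2 hmp) (mul_nonneg hm hD),
    mul_nonneg (sub_nonneg.2 hmp) (mul_nonneg hp hD),
    mul_nonneg (sub_nonneg.2 hpm) hD, mul_nonneg (sub_nonneg.2 hpm) hm,
    mul_nonneg (sub_nonneg.2 hpm) hp, mul_nonneg (sub_nonneg.2 hpD) (mul_nonneg hm hD),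
    mul_nonneg (sub_nonneg.2 hmp) hm, mul_nonneg hm (mul_nonneg hm hD),
    mul_nonneg (mul_nonneg hm hm) hm, mul_nonneg (sub_nonneg.2 hD2) (mul_nonneg hm hm)]

lemma core (m p w x : ℝ) (hm : 0 ≤ m) (hp : 0 ≤ p) (hw : 0 ≤ w) (hx : 0 ≤ x)
    (hwp : w ≤ p) (hxp : x ≤ p) (hpm : p ≤ m + w) (hmp : m + p ≤ 1)
    (hD34 : 2*p - w ≤ 3/4)
    (e1l : m*(2*p-w)^2*(16-(2*p-w)^2) ≤ 64*w)
    (e1u : 4*w ≤ m*(2*p-w)^2)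
    (e2u : 8*x ≤ (2*m+p-x)*p^2) :
    m*(2*p-w-x)^2 ≤ 8*(w-x) := by
  set D := 2*p - w with hD_def
  have hD0 : 0 ≤ D := by simp only [hD_def]; linarith
  have hpD : p ≤ D := by simp only [hD_def]; linarith
  have hDp : D ≤ 2*p := by simp only [hD_def]; linarith
  -- 8p ≤ D(4+mD)
  have hP : 8*p ≤ D*(4+m*D) := by
    have : D*(4+m*D) = 4*D + m*D^2 := by ring
    rw [this]
    have h8p : 8*p = 4*D + 4*w := by simp only [hD_def]; ring
    linarith
  have hpm4 : 4*p ≤ m*(4+D^2) := by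
    have : m*(4+D^2) = 4*m + m*D^2 := by ring
    rw [this]; linarith
  have hC := stepC m p D hm hp hD0 hD34 hmp hpm4 hDp hpD
  -- 64 p² ≤ D²(4+mD)²
  have hp2 : (8*p)*(8*p) ≤ (D*(4+m*D))*(D*(4+m*D)) := by
    apply mul_self_le_mul_self (by linarith) hP
  -- B' : 8(2m+p)p² ≤ mD²(8−D²)
  have hB' : 8*(2*m+p)*p^2 ≤ m*D^2*(8-D^2) := by
    have h2mp : (0:ℝ) ≤ 2*m+p := by linarith
    have hA1 := mul_le_mul_of_nonneg_left hp2 h2mp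
    have hA2 := mul_le_mul_of_nonneg_right hC (mul_self_nonneg D)
    nlinarith [hA1, hA2]
  -- 64 x ≤ mD²(8−D²)
  have hBx : 64*x ≤ m*D^2*(8-D^2) := by
    have hxp2 : 0 ≤ x*p^2 := mul_nonneg hx (sq_nonneg p)
    nlinarith [e2u, hB', hxp2]
  -- A : mD² ≤ 8(w−x)
  have hA : m*D^2 ≤ 8*(w-x) := by
    have he1l' : m*D^2*(16-D^2) ≤ 64*w := e1l
    nlinarith [he1l', hBx]
  -- goal : m(D−x)² ≤ mD²
  have hfin : m*(D-x)^2 ≤ m*D^2 := by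
    nlinarith [mul_nonneg (mul_nonneg hm hx) (show (0:ℝ) ≤ 2*D - x by linarith)]
  calc m*(2*p-w-x)^2 = m*(D-x)^2 := by rw [hD_def]
    _ ≤ m*D^2 := hfin
    _ ≤ 8*(w-x) := hA

set_option maxHeartbeats 1600000 in
theorem nlMean_iteration_inequality :
    ∀ z y : ℝ, 0 ≤ z → z ≤ y → y ≤ 1 → y - z ≤ 3 / 4 →
      nlMean z y ≤ nlMean ((z + nlMean z y) / 2) (nlMean (nlMean z y) y) := by
  intro z y hz hzy hy1 hd
  have hd0 : (0:ℝ) ≤ y - z := by linarith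
  set m := nlMean z y with hmdef
  have hm0 : 0 ≤ m := nlMean_nonneg z y (by linarith)
  have hU1 := nlMean_upper z y (by linarith)
  have hL1 := nlMean_lower z y (by linarith) (by nlinarith [hd, hd0, mul_nonneg hd0 hd0])
  -- z ≤ m
  have hzm : z ≤ m := by
    have haux : z*(2+(z-y)^2/4) ≤ z + y := by
      nlinarith [mul_nonneg (sub_nonneg.2 (hzy.trans hy1)) hd0, mul_nonneg hz hd0,
        mul_nonneg (mul_nonneg hz hd0) hd0, sq_nonneg (y-z)]
    have hpos : (0:ℝ) < 2+(z-y)^2/4 := by positivity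
    nlinarith [hU1, haux]
  -- 2m ≤ z+y
  have hm2 : 2*m ≤ z + y := by
    have h1 : 0 ≤ m*((z-y)^2/4 - (z-y)^4/64) := by
      have : (z-y)^2/4 - (z-y)^4/64 = (z-y)^2*(16-(z-y)^2)/64 := by ring
      rw [this]
      apply mul_nonneg hm0
      apply div_nonneg _ (by norm_num)
      apply mul_nonneg (sq_nonneg _)
      nlinarith
    linarith [hL1, h1]
  have hmy : m ≤ y := by linarith
  have hp0 : 0 ≤ y - m := by linarith
  have hpd : y - m ≤ 3/4 := by linarith
  set b := nlMean m y with hbdef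
  have hb0 : 0 ≤ b := nlMean_nonneg m y (by linarith)
  have hU2 := nlMean_upper m y (by linarith)
  have hL2 := nlMean_lower m y (by linarith) (by nlinarith [hpd, hp0, mul_nonneg hp0 hp0])
  -- m ≤ b
  have hmb : m ≤ b := by
    have haux : m*(2+(m-y)^2/4) ≤ m + y := by
      nlinarith [mul_nonneg hm0 hp0, mul_nonneg (mul_nonneg hm0 hp0) hp0,
        sq_nonneg (y-m)]
    have hpos : (0:ℝ) < 2+(m-y)^2/4 := by positivity
    nlinarith [hU2, haux]
  -- 2b ≤ m+y
  have hb2 : 2*b ≤ m + y := by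
    have h1 : 0 ≤ b*((m-y)^2/4 - (m-y)^4/64) := by
      have : (m-y)^2/4 - (m-y)^4/64 = (m-y)^2*(16-(m-y)^2)/64 := by ring
      rw [this]
      apply mul_nonneg hb0
      apply div_nonneg _ (by norm_num)
      apply mul_nonneg (sq_nonneg _)
      nlinarith
    linarith [hL2, h1]
  -- apply the core lemma
  have hkey := core m (y - m) (y + z - 2*m) (y + m - 2*b) hm0 hp0
    (by linarith) (by linarith) (by linarith) (by linarith) (by linarith)
    (by linarith) (by linarith)
    (by nlinarith [hL1]) (by nlinarith [hU1]) (by nlinarith [hU2])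
  -- finish
  have hs3 : 0 < Real.sqrt (4 + ((z + m)/2 - b) ^ 2) := Real.sqrt_pos.mpr (by positivity)
  show m ≤ nlMean ((z + m) / 2) b
  rw [show nlMean ((z + m)/2) b = ((z + m)/2 + b)/Real.sqrt (4 + ((z + m)/2 - b) ^ 2) from rfl,
    le_div_iff₀ hs3]
  have hsub := sqrt_ub ((z + m)/2 - b)
  calc m * Real.sqrt (4 + ((z + m)/2 - b) ^ 2)
      ≤ m * (2 + ((z + m)/2 - b) ^ 2 / 4) := mul_le_mul_of_nonneg_left hsub hm0
    _ ≤ (z + m)/2 + b := by nlinarith [hkey]
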